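/- arXiv:1801.05494 — 3 statements merged into one kernel-verified Lean document; each statement's English description precedes it below -/
import Mathlib

section
/- Let X be a finite set with |X| = r where r ≥ 3, and fix x ∈ X. Then the subconstituent algebra T of K_r with respect to x has dimension 5 as a ℂ-vector space. -/
/-- The all-ones matrix `J` on index set `X`. -/
def Jmat (X : Type*) : Matrix X X ℂ := Matrix.of fun _ _ => 1

/-- The 0-th dual idempotent `E₀*` with respect to the base vertex `x`. -/
def E0s (X : Type*) [DecidableEq X] (x : X) : Matrix X X ℂ :=
  Matrix.diagonal fun y => if y = x then 1 else 0

/-- The adjacency matrix `A = J - I` of the complete graph `K_r`. -/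
def Amat (X : Type*) [DecidableEq X] : Matrix X X ℂ := Jmat X - 1

/-- The dual adjacency matrix `A* = r E₀* - I` of `K_r` with respect to `x`. -/
def AmatStar (X : Type*) [DecidableEq X] (r : ℕ) (x : X) : Matrix X X ℂ :=
  (r : ℂ) • E0s X x - 1

/-- The standard spanning family of the Terwilliger algebra of a complete graph. -/
noncomputable def Bfam (X : Type*) [Fintype X] [DecidableEq X] (x : X) : Fin 5 → Matrix X X ℂ :=
  ![1, Jmat X, E0s X x, E0s X x * Jmat X, Jmat X * E0s X x]

section Aux

variable (X : Type*) [Fintype X] [DecidableEq X] (x : X)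
set_option linter.unusedSectionVars false

lemma hEE : E0s X x * E0s X x = E0s X x := by
  rw [E0s, Matrix.diagonal_mul_diagonal]
  exact congrArg _ (funext fun y => by split_ifs <;> simp)

lemma hJJ : Jmat X * Jmat X = (Fintype.card X : ℂ) • Jmat X := by
  ext y z; simp [Jmat, Matrix.mul_apply]

lemma hEJE : E0s X x * Jmat X * E0s X x = E0s X x := by
  ext y z
  simp [E0s, Jmat, Matrix.diagonal_mul, Matrix.mul_diagonal, Matrix.diagonal_apply]
  split_ifs <;> simp_all

lemma hJEJ : Jmat X * E0s X x * Jmat X = Jmat X := by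
  ext y z
  rw [Matrix.mul_assoc]
  simp [Jmat, E0s, Matrix.mul_apply, Matrix.diagonal_apply]

lemma hJJE : Jmat X * (Jmat X * E0s X x) = (Fintype.card X : ℂ) • (Jmat X * E0s X x) := by
  rw [← mul_assoc, hJJ, smul_mul_assoc]

lemma hJEJ' : Jmat X * (E0s X x * Jmat X) = Jmat X := by
  rw [← mul_assoc, hJEJ]

lemma hEEJ : E0s X x * (E0s X x * Jmat X) = E0s X x * Jmat X := by
  rw [← mul_assoc, hEE]

lemma hEJE' : E0s X x * (Jmat X * E0s X x) = E0s X x := by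
  rw [← mul_assoc, hEJE]

lemma hEJJ : (E0s X x * Jmat X) * Jmat X = (Fintype.card X : ℂ) • (E0s X x * Jmat X) := by
  rw [mul_assoc, hJJ, mul_smul_comm]

lemma hEJEJ : (E0s X x * Jmat X) * (E0s X x * Jmat X) = E0s X x * Jmat X := by
  rw [← mul_assoc, hEJE]

lemma hEJJE : (E0s X x * Jmat X) * (Jmat X * E0s X x) = (Fintype.card X : ℂ) • E0s X x := by
  rw [← mul_assoc, hEJJ, smul_mul_assoc, hEJE]

lemma hJEE : (Jmat X * E0s X x) * E0s X x = Jmat X * E0s X x := by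
  rw [mul_assoc, hEE]

lemma hJEEJ : (Jmat X * E0s X x) * (E0s X x * Jmat X) = Jmat X := by
  rw [← mul_assoc, hJEE, hJEJ]

lemma hJEJE : (Jmat X * E0s X x) * (Jmat X * E0s X x) = Jmat X * E0s X x := by
  rw [← mul_assoc, hJEJ]

lemma Blin (h3 : 3 ≤ Fintype.card X) : LinearIndependent ℂ (Bfam X x) := by
  rw [Fintype.linearIndependent_iff]
  intro g hg
  obtain ⟨y, hy⟩ := Fintype.exists_ne_of_one_lt_card (by omega) x
  obtain ⟨z, hz⟩ : ∃ z, z ∉ ({x, y} : Finset X) := by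
    by_contra h
    push_neg at h
    have h2 : Fintype.card X ≤ ({x, y} : Finset X).card := by
      rw [← Finset.card_univ]; exact Finset.card_le_card fun a _ => h a
    have : ({x, y} : Finset X).card ≤ 2 := by
      refine le_trans (Finset.card_insert_le _ _) ?_; simp
    omega
  simp only [Finset.mem_insert, Finset.mem_singleton, not_or] at hz
  obtain ⟨hzx, hzy⟩ := hz
  have key : ∀ a b : X, (∑ i, g i • Bfam X x i) a b = 0 := by
    intro a b; rw [hg]; simp
  have e1 := key y z
  have e2 := key y y
  have e3 := key x z
  have e4 := key y x
  have e5 := key x x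
  simp [Bfam, Fin.sum_univ_five, Jmat, E0s, Matrix.one_apply, Matrix.diagonal_apply,
    Matrix.mul_diagonal, Matrix.diagonal_mul, hy, hzx, hzy, Ne.symm hy, Ne.symm hzx,
    Ne.symm hzy] at e1 e2 e3 e4 e5
  have h1 : g 1 = 0 := by linear_combination e1
  have h0 : g 0 = 0 := by linear_combination e2 - e1
  have h3' : g 3 = 0 := by linear_combination e3 - e1
  have h4 : g 4 = 0 := by linear_combination e4 - e1
  have h2' : g 2 = 0 := by linear_combination e5 - e2 - e3 - e4 + 2 * e1
  intro i
  fin_cases i <;> assumption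

end Aux

theorem stmt3 (X : Type*) [Fintype X] [DecidableEq X] (r : ℕ) (hr : 3 ≤ r)
    (hcard : Fintype.card X = r) (x : X) :
    Module.finrank ℂ
      ↥(Algebra.adjoin ℂ ({Amat X, AmatStar X r x} : Set (Matrix X X ℂ))) = 5 := by
  subst hcard
  set S : Submodule ℂ (Matrix X X ℂ) := Submodule.span ℂ (Set.range (Bfam X x)) with hS
  have m0 : (1 : Matrix X X ℂ) ∈ S := Submodule.subset_span ⟨0, rfl⟩
  have m1 : Jmat X ∈ S := Submodule.subset_span ⟨1, rfl⟩
  have m2 : E0s X x ∈ S := Submodule.subset_span ⟨2, rfl⟩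
  have m3 : E0s X x * Jmat X ∈ S := Submodule.subset_span ⟨3, rfl⟩
  have m4 : Jmat X * E0s X x ∈ S := Submodule.subset_span ⟨4, rfl⟩
  have prodmem : ∀ i j : Fin 5, Bfam X x i * Bfam X x j ∈ S := by
    intro i j
    fin_cases i <;> fin_cases j <;>
      simp only [Bfam, Fin.isValue, Fin.zero_eta, Fin.mk_one, show (⟨2,by omega⟩ : Fin 5) = 2 from rfl,
        show (⟨3,by omega⟩ : Fin 5) = 3 from rfl, show (⟨4,by omega⟩ : Fin 5) = 4 from rfl,
        Matrix.cons_val_zero, Matrix.cons_val_one,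
        Matrix.head_cons, Matrix.cons_val_two, Matrix.tail_cons, Matrix.cons_val_three,
        Matrix.cons_val_four, one_mul, mul_one] <;>
      first
      | exact m0 | exact m1 | exact m2 | exact m3 | exact m4
      | (rw [hJJ]; exact S.smul_mem _ m1)
      | (rw [hJEJ']; exact m1)
      | (rw [hJJE]; exact S.smul_mem _ m4)
      | (rw [hEE]; exact m2)
      | (rw [hEEJ]; exact m3)
      | (rw [hEJE']; exact m2)
      | (rw [hEJJ]; exact S.smul_mem _ m3)
      | (rw [hEJE]; exact m2)
      | (rw [hEJEJ]; exact m3)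
      | (rw [hEJJE]; exact S.smul_mem _ m2)
      | (rw [hJEJ]; exact m1)
      | (rw [hJEE]; exact m4)
      | (rw [hJEEJ]; exact m1)
      | (rw [hJEJE]; exact m4)
  have hmulS : ∀ p ∈ S, ∀ q ∈ S, p * q ∈ S := by
    have hle : S * S ≤ S := by
      rw [hS, Submodule.span_mul_span, Submodule.span_le]
      rintro _ ⟨a, ⟨i, rfl⟩, b, ⟨j, rfl⟩, rfl⟩
      exact prodmem i j
    exact fun p hp q hq => hle (Submodule.mul_mem_mul hp hq)
  have hn : (Fintype.card X : ℂ) ≠ 0 := Nat.cast_ne_zero.mpr (by omega)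
  set T := Algebra.adjoin ℂ ({Amat X, AmatStar X (Fintype.card X) x} : Set (Matrix X X ℂ)) with hT
  have heq : Subalgebra.toSubmodule T = S := by
    apply le_antisymm
    · have : T ≤ S.toSubalgebra m0 (fun p q hp hq => hmulS p hp q hq) := by
        rw [hT, Algebra.adjoin_le_iff]
        rintro a (rfl | rfl)
        · show Amat X ∈ S
          rw [Amat]; exact S.sub_mem m1 m0
        · show AmatStar X (Fintype.card X) x ∈ S
          rw [AmatStar]; exact S.sub_mem (S.smul_mem _ m2) m0
      exact fun a ha => this ha
    · rw [hS, Submodule.span_le]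
      rintro _ ⟨i, rfl⟩
      have hA : Amat X ∈ T := Algebra.subset_adjoin (by simp)
      have hAs : AmatStar X (Fintype.card X) x ∈ T := Algebra.subset_adjoin (by simp)
      have hJ : Jmat X ∈ T := by
        have : Jmat X = Amat X + 1 := by rw [Amat]; abel
        rw [this]; exact T.add_mem hA T.one_mem
      have hE : E0s X x ∈ T := by
        have key : AmatStar X (Fintype.card X) x + 1 = (Fintype.card X : ℂ) • E0s X x := by
          rw [AmatStar]; abel
        have : E0s X x = (Fintype.card X : ℂ)⁻¹ • (AmatStar X (Fintype.card X) x + 1) := by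
          rw [key, inv_smul_smul₀ hn]
        rw [this]
        exact T.smul_mem (T.add_mem hAs T.one_mem) _
      fin_cases i
      · exact T.one_mem
      · exact hJ
      · exact hE
      · exact T.mul_mem hE hJ
      · exact T.mul_mem hJ hE
  have h5 : Module.finrank ℂ ↥S = 5 := by
    rw [hS, finrank_span_eq_card (Blin X x (by omega))]
    simp
  rw [show Module.finrank ℂ ↥T = Module.finrank ℂ ↥(Subalgebra.toSubmodule T) from rfl, heq, h5]
end

section
/- Fix integers D ≥ 1 and r ≥ 3, and let C = 𝔸_D⁻¹𝔸_D*⁻¹𝔸_D𝔸_D*. Then for every integer s with −D ≤ s ≤ D, the scalar (1−r)^s is an eigenvalue of C; that is, there exists a nonzero vector v ∈ ℂ^𝕏 with C v = (1−r)^s·v. -/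
/-- The `D`-th distance matrix `𝔸_D` of the Hamming graph `H(D,r)`:
the `(u,v)`-entry is `1` if `u` and `v` differ in all `D` coordinates, `0` otherwise. -/
noncomputable def hammingAD (D r : ℕ) : Matrix (Fin D → Fin r) (Fin D → Fin r) ℂ :=
  Matrix.of fun u v => if ∀ k, u k ≠ v k then 1 else 0

/-- The Hamming weight of a vertex of `H(D,r)`: the number of nonzero coordinates. -/
def hammingWt {D r : ℕ} [NeZero r] (y : Fin D → Fin r) : ℕ :=
  (Finset.univ.filter fun k => y k ≠ 0).card

/-- The `D`-th dual distance matrix `𝔸_D*` of `H(D,r)` with respect to the base vertex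
`(0,…,0)`: the diagonal matrix with `(y,y)`-entry `(−1)^{w(y)} (r−1)^{D−w(y)}`. -/
noncomputable def hammingADstar (D r : ℕ) [NeZero r] :
    Matrix (Fin D → Fin r) (Fin D → Fin r) ℂ :=
  Matrix.diagonal fun y => (-1) ^ hammingWt y * ((r : ℂ) - 1) ^ (D - hammingWt y)

/-- The group commutator `C = 𝔸_D⁻¹ 𝔸_D*⁻¹ 𝔸_D 𝔸_D*`. -/
noncomputable def hammingC (D r : ℕ) [NeZero r] :
    Matrix (Fin D → Fin r) (Fin D → Fin r) ℂ :=
  (hammingAD D r)⁻¹ * (hammingADstar D r)⁻¹ * hammingAD D r * hammingADstar D r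

/-!
`𝔸_D` and `𝔸_D*` are the `D`-fold tensor powers of the matrices `𝔸₁ = J - I` and
`𝔸₁* = diag(r - 1, -1, …, -1)` of the complete graph `K_r`, so both act coordinatewise on
product vectors `y ↦ ∏ k, f k (y k)`. On `K_r` one has `𝔸₁ 𝔸₁* f = μ 𝔸₁* 𝔸₁ f` with
`μ = 1 - r, 1, (1 - r)⁻¹` for `f = δ₀, δ₁ - δ₂, 1` respectively. Taking a product of `D` such
vectors whose exponents of `1 - r` add up to `s` gives an eigenvector of the commutator `C`
for `(1 - r) ^ s`.
-/

open Finset Matrix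

section Commutator

variable {n K : Type*} [Fintype n] [DecidableEq n] [Field K]

theorem Matrix.mulVec_commutator_eq_smul {A B : Matrix n n K} (hA : IsUnit A.det)
    (hB : IsUnit B.det) {μ : K} {v : n → K} (h : A *ᵥ (B *ᵥ v) = μ • (B *ᵥ (A *ᵥ v))) :
    (A⁻¹ * B⁻¹ * A * B) *ᵥ v = μ • v := by
  rw [← mulVec_mulVec, ← mulVec_mulVec, ← mulVec_mulVec, h, mulVec_smul, mulVec_smul,
    mulVec_mulVec _ B⁻¹, nonsing_inv_mul B hB, one_mulVec, mulVec_mulVec _ A⁻¹,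
    nonsing_inv_mul A hA, one_mulVec]

end Commutator

theorem Finset.prod_zpow_eq_zpow_sum {ι G₀ : Type*} [CommGroupWithZero G₀] (s : Finset ι)
    (c : ι → ℤ) {x : G₀} (hx : x ≠ 0) : ∏ k ∈ s, x ^ c k = x ^ ∑ k ∈ s, c k :=
  Finset.cons_induction (by simp)
    (fun _ _ _ ih ↦ by rw [prod_cons, sum_cons, ih, zpow_add₀ hx]) s

theorem exists_sum_eq_of_natAbs_le {D : ℕ} {s : ℤ} (hs : s.natAbs ≤ D) :
    ∃ c : Fin D → ℤ, (∀ k, |c k| ≤ 1) ∧ ∑ k, c k = s := by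
  refine ⟨fun k => if (k : ℕ) < s.natAbs then s.sign else 0, fun k => ?_, ?_⟩
  · dsimp only
    split_ifs
    · rcases Int.sign_trichotomy s with h | h | h <;> simp [h]
    · simp
  · rw [Fin.sum_univ_eq_sum_range (fun i => if i < s.natAbs then s.sign else 0), ← sum_filter,
      show (range D).filter (· < s.natAbs) = range s.natAbs by ext; simp; omega]
    simpa [mul_comm] using Int.sign_mul_abs s

theorem fun_prod_ne_zero {ι R : Type*} [Fintype ι] {β : ι → Type*} [CommMonoidWithZero R]
    [NoZeroDivisors R] [Nontrivial R] {f : ∀ i, β i → R} (hf : ∀ i, f i ≠ 0) :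
    (fun y : ∀ i, β i => ∏ i, f i (y i)) ≠ 0 := by
  choose a ha using fun i => Function.ne_iff.1 (hf i)
  exact Function.ne_iff.2 ⟨a, prod_ne_zero_iff.2 fun i _ => ha i⟩

section Hamming

variable {D r : ℕ}

theorem hammingAD_mulVec_prod (f : Fin D → Fin r → ℂ) (u : Fin D → Fin r) :
    (hammingAD D r *ᵥ fun y => ∏ k, f k (y k)) u = ∏ k, (∑ a, f k a - f k (u k)) := by
  calc (hammingAD D r *ᵥ fun y => ∏ k, f k (y k)) u
      = ∑ y : Fin D → Fin r, ∏ k, if u k ≠ y k then f k (y k) else 0 := by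
        simp only [mulVec, dotProduct, hammingAD, of_apply, Fintype.prod_ite_zero, boole_mul]
        convert rfl
    _ = ∏ k, ∑ a, if u k ≠ a then f k a else 0 :=
        (Fintype.prod_sum fun k a => if u k ≠ a then f k a else 0).symm
    _ = ∏ k, (∑ a, f k a - f k (u k)) := by
        simp only [← sum_erase_eq_sub (mem_univ _), sum_ite, filter_ne, sum_const_zero, add_zero]

/-- The `D`-fold tensor power of `(J - I)⁻¹ = (r - 1)⁻¹ J - I`. -/
theorem hammingAD_mul_eq_one (hr : r ≠ 1) :
    hammingAD D r *
      Matrix.of (fun u v => ∏ k, (((r : ℂ) - 1)⁻¹ - if u k = v k then 1 else 0)) = 1 := by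
  have hr1 : (r : ℂ) - 1 ≠ 0 := sub_ne_zero.2 (by exact_mod_cast hr)
  ext u w
  have hsum : ∀ k,
      ∑ a : Fin r, (((r : ℂ) - 1)⁻¹ - if a = w k then 1 else 0) = ((r : ℂ) - 1)⁻¹ := by
    intro k
    simp only [sum_sub_distrib, sum_const, card_univ, Fintype.card_fin, nsmul_eq_mul,
      sum_ite_eq', mem_univ, if_true]
    field_simp
    ring
  show (hammingAD D r *ᵥ fun y => ∏ k, (((r : ℂ) - 1)⁻¹ - if y k = w k then 1 else 0)) u = _
  rw [hammingAD_mulVec_prod (fun k a => ((r : ℂ) - 1)⁻¹ - if a = w k then 1 else 0)]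
  simp [hsum, one_apply, funext_iff, Fintype.prod_ite_zero]

theorem isUnit_det_hammingAD (hr : r ≠ 1) : IsUnit (hammingAD D r).det :=
  isUnit_det_of_right_inverse (hammingAD_mul_eq_one hr)

variable [NeZero r]

def coordDual (r : ℕ) [NeZero r] (a : Fin r) : ℂ := if a = 0 then (r : ℂ) - 1 else -1

@[simp]
theorem coordDual_zero : coordDual r 0 = r - 1 := if_pos rfl

theorem coordDual_of_ne_zero {a : Fin r} (ha : a ≠ 0) : coordDual r a = -1 := if_neg ha

theorem prod_coordDual (y : Fin D → Fin r) :
    ∏ k, coordDual r (y k) = (-1) ^ hammingWt y * ((r : ℂ) - 1) ^ (D - hammingWt y) := by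
  have hcard := card_filter_add_card_filter_not (s := univ) (fun k => y k ≠ 0)
  simp only [card_univ, Fintype.card_fin, not_not] at hcard
  simp only [coordDual]
  rw [prod_ite, prod_const, prod_const, mul_comm]
  congr 2
  unfold hammingWt
  omega

theorem hammingADstar_mulVec_prod (f : Fin D → Fin r → ℂ) :
    (hammingADstar D r *ᵥ fun y => ∏ k, f k (y k)) =
      fun y => ∏ k, coordDual r (y k) * f k (y k) := by
  ext y
  rw [hammingADstar, mulVec_diagonal, ← prod_coordDual, prod_mul_distrib]

theorem isUnit_det_hammingADstar (hr : r ≠ 1) : IsUnit (hammingADstar D r).det := by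
  have hr1 : (r : ℂ) - 1 ≠ 0 := sub_ne_zero.2 (by exact_mod_cast hr)
  rw [hammingADstar, det_diagonal]
  exact isUnit_iff_ne_zero.2 (prod_ne_zero_iff.2 fun y _ => by simp [hr1])

/-- With `𝔸₁ f = (∑ a, f a) - f` and `𝔸₁* = diagonal (coordDual r)` (the case `D = 1`),
this says `𝔸₁ 𝔸₁* f = μ • 𝔸₁* 𝔸₁ f`. -/
def IsCommutatorEigenvector (r : ℕ) [NeZero r] (μ : ℂ) (f : Fin r → ℂ) : Prop :=
  ∀ u, ∑ a, coordDual r a * f a - coordDual r u * f u =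
    μ * (coordDual r u * (∑ a, f a - f u))

theorem hammingAD_mulVec_hammingADstar_mulVec_prod {f : Fin D → Fin r → ℂ} {μ : Fin D → ℂ}
    (hf : ∀ k, IsCommutatorEigenvector r (μ k) (f k)) :
    hammingAD D r *ᵥ (hammingADstar D r *ᵥ fun y => ∏ k, f k (y k)) =
      (∏ k, μ k) • (hammingADstar D r *ᵥ (hammingAD D r *ᵥ fun y => ∏ k, f k (y k))) := by
  ext u
  have hAv : (hammingAD D r *ᵥ fun y => ∏ k, f k (y k)) =
      fun y => ∏ k, (∑ a, f k a - f k (y k)) :=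
    funext (hammingAD_mulVec_prod f)
  rw [hammingADstar_mulVec_prod, hammingAD_mulVec_prod (fun k a => coordDual r a * f k a), hAv,
    hammingADstar_mulVec_prod (fun k a => ∑ b, f k b - f k a)]
  simp only [Pi.smul_apply, smul_eq_mul, hf _ (u _), prod_mul_distrib]

theorem sum_coordDual_mul (f : Fin r → ℂ) : ∑ a, coordDual r a * f a = r * f 0 - ∑ a, f a := by
  have h : ∀ a, coordDual r a * f a = r * (if a = 0 then f a else 0) - f a := by
    intro a; unfold coordDual; split_ifs <;> ring
  simp only [h, sum_sub_distrib, ← mul_sum, sum_ite_eq', mem_univ, if_true]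

theorem isCommutatorEigenvector_single_zero :
    IsCommutatorEigenvector r (1 - r) (Pi.single 0 1) := by
  intro u
  rcases eq_or_ne u 0 with rfl | hu
  · simp [sum_coordDual_mul]
  · simp [sum_coordDual_mul, coordDual_of_ne_zero hu, hu]

theorem isCommutatorEigenvector_one_of_sum_eq_zero {f : Fin r → ℂ} (hf0 : f 0 = 0)
    (hf : ∑ a, f a = 0) : IsCommutatorEigenvector r 1 f := by
  intro u
  rw [sum_coordDual_mul, hf0, hf]; ring

theorem isCommutatorEigenvector_const (hr : r ≠ 1) :
    IsCommutatorEigenvector r (1 - r)⁻¹ 1 := by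
  have hr1 : (1 : ℂ) - r ≠ 0 := sub_ne_zero.2 (by exact_mod_cast hr.symm)
  intro u
  rw [sum_coordDual_mul]
  simp only [Pi.one_apply, mul_one, sum_const, card_univ, Fintype.card_fin, nsmul_eq_mul]
  field_simp
  ring

theorem exists_isCommutatorEigenvector (hr : 3 ≤ r) {c : ℤ} (hc : |c| ≤ 1) :
    ∃ f : Fin r → ℂ, f ≠ 0 ∧ IsCommutatorEigenvector r ((1 - r) ^ c) f := by
  obtain rfl | rfl | rfl : c = -1 ∨ c = 0 ∨ c = 1 := by have := abs_le.1 hc; omega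
  · exact ⟨1, one_ne_zero, by simpa using isCommutatorEigenvector_const (by omega)⟩
  · set i : Fin r := ⟨1, by omega⟩
    set j : Fin r := ⟨2, by omega⟩
    have hi : i ≠ 0 := by simp [i, Fin.ext_iff]
    have hj : j ≠ 0 := by simp [j, Fin.ext_iff]
    have hij : i ≠ j := by simp [i, j, Fin.ext_iff]
    refine ⟨Pi.single i 1 - Pi.single j 1, Function.ne_iff.2 ⟨i, by simp [hij]⟩, ?_⟩
    rw [zpow_zero]
    exact isCommutatorEigenvector_one_of_sum_eq_zero (by simp [hi.symm, hj.symm])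
      (by simp [sum_sub_distrib])
  · exact ⟨Pi.single 0 1, by simp, by simpa using isCommutatorEigenvector_single_zero⟩

end Hamming

theorem stmt16 (D r : ℕ) (hr : 3 ≤ r)
    (s : ℤ) (hs₁ : -(D : ℤ) ≤ s) (hs₂ : s ≤ (D : ℤ)) :
    ∃ v : (Fin D → Fin r) → ℂ, v ≠ 0 ∧
      (@hammingC D r ⟨by omega⟩).mulVec v = ((1 - (r : ℂ)) ^ s) • v := by
  have : NeZero r := ⟨by omega⟩
  obtain ⟨c, hc, rfl⟩ := exists_sum_eq_of_natAbs_le (D := D) (s := s) (by omega)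
  choose f hf0 hf using fun k => exists_isCommutatorEigenvector hr (hc k)
  refine ⟨fun y => ∏ k, f k (y k), fun_prod_ne_zero hf0, ?_⟩
  have h1r : (1 : ℂ) - r ≠ 0 := sub_ne_zero.2 (by exact_mod_cast (by omega : 1 ≠ r))
  rw [← prod_zpow_eq_zpow_sum _ _ h1r]
  exact mulVec_commutator_eq_smul (isUnit_det_hammingAD (by omega))
    (isUnit_det_hammingADstar (by omega)) (hammingAD_mulVec_hammingADstar_mulVec_prod hf)
end

section
/- Fix integers D ≥ 1 and r ≥ 3, and let C = 𝔸_D⁻¹𝔸_D*⁻¹𝔸_D𝔸_D*. Suppose v₁, …, v_D ∈ ℂ^{Fin r} and the index set {1,…,D} is partitioned into three sets S₀, S₁, S₂ such that: v_k = δ₀ (the vector with a one in coordinate 0 and zeros elsewhere) for k ∈ S₀; v_k = 𝟙 (the all-ones vector on Fin r) for k ∈ S₁; and v_k(0) = 0 and Σ_{a ∈ Fin r} v_k(a) = 0 for k ∈ S₂. Let v ∈ ℂ^𝕏 be the tensor-product vector defined by v(y) = Π_{k=1}^{D} v_k(y_k). Then C v = (1−r)^{|S₀| − |S₁|}·v.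 -/
open Matrix Finset SimpleGraph

namespace Matrix

variable {ι α R : Type*} [Fintype ι] [CommSemiring R]

def kroneckerPi (M : ι → Matrix α α R) : Matrix (ι → α) (ι → α) R :=
  of fun u y => ∏ k, M k (u k) (y k)

theorem kroneckerPi_apply (M : ι → Matrix α α R) (u y : ι → α) :
    kroneckerPi M u y = ∏ k, M k (u k) (y k) := rfl

theorem kroneckerPi_one [DecidableEq α] : kroneckerPi (fun _ : ι => (1 : Matrix α α R)) = 1 := by
  ext u y
  simp only [kroneckerPi_apply, one_apply, prod_boole, mem_univ, true_implies, funext_iff]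

theorem kroneckerPi_diagonal [DecidableEq α] (d : ι → α → R) :
    kroneckerPi (fun k => diagonal (d k)) = diagonal fun y => ∏ k, d k (y k) := by
  ext u y
  by_cases h : u = y
  · simp [kroneckerPi_apply, h]
  · obtain ⟨k, hk⟩ := Function.ne_iff.mp h
    simp [kroneckerPi_apply, h, prod_eq_zero (mem_univ k), diagonal_apply_ne _ hk]

variable [Fintype α] [DecidableEq ι]

theorem kroneckerPi_mulVec_prod (M : ι → Matrix α α R) (w : ι → α → R) :
    kroneckerPi M *ᵥ (fun y => ∏ k, w k (y k)) = fun u => ∏ k, (M k *ᵥ w k) (u k) := by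
  funext u
  simp only [mulVec, dotProduct, kroneckerPi_apply, ← prod_mul_distrib]
  exact (Fintype.prod_sum fun k a => M k (u k) a * w k a).symm

theorem kroneckerPi_mulVec_prod_eq_smul {M N : ι → Matrix α α R} {w : ι → α → R} {c : ι → R}
    (h : ∀ k, M k *ᵥ w k = c k • N k *ᵥ w k) :
    kroneckerPi M *ᵥ (fun y => ∏ k, w k (y k)) =
      (∏ k, c k) • kroneckerPi N *ᵥ (fun y => ∏ k, w k (y k)) := by
  funext u
  simp only [kroneckerPi_mulVec_prod, h, Pi.smul_apply, smul_eq_mul, prod_mul_distrib]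

theorem kroneckerPi_mul (M N : ι → Matrix α α R) :
    kroneckerPi M * kroneckerPi N = kroneckerPi fun k => M k * N k := by
  ext u y
  simp only [mul_apply, kroneckerPi_apply, ← prod_mul_distrib]
  exact (Fintype.prod_sum fun k a => M k (u k) a * N k a (y k)).symm

theorem isUnit_det_kroneckerPi {R : Type*} [CommRing R] [DecidableEq α] {M : ι → Matrix α α R}
    (hM : ∀ k, IsUnit (M k).det) : IsUnit (kroneckerPi M).det :=
  isUnit_det_of_right_inverse <| by
    rw [kroneckerPi_mul, funext fun k => mul_nonsing_inv _ (hM k), kroneckerPi_one]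

theorem mulVec_commutator_eq_smul_s18 {n : Type*} [Fintype n] [DecidableEq n] {R : Type*}
    [CommRing R] {A B : Matrix n n R} (hA : IsUnit A.det) (hB : IsUnit B.det) {v : n → R} {c : R}
    (h : (A * B) *ᵥ v = c • (B * A) *ᵥ v) : (A⁻¹ * B⁻¹ * A * B) *ᵥ v = c • v := by
  have hBA : A⁻¹ * B⁻¹ * (B * A) = 1 := by
    rw [mul_assoc, nonsing_inv_mul_cancel_left _ _ hB, nonsing_inv_mul _ hA]
  rw [mul_assoc _ A, ← mulVec_mulVec, h, mulVec_smul, mulVec_mulVec, hBA, one_mulVec]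

end Matrix

section CompleteGraph

variable {K : Type*} [Field K]

theorem completeGraph_adjMatrix_mulVec {V : Type*} [Fintype V] [DecidableEq V] (w : V → K) :
    (completeGraph V).adjMatrix K *ᵥ w = fun a => ∑ b, w b - w a := by
  funext a
  simp only [adjMatrix_mulVec_apply, completeGraph_eq_top, neighborFinset_top]
  rw [eq_sub_iff_add_eq, ← sum_singleton w a, sum_compl_add_sum]

theorem isUnit_det_completeGraph_adjMatrix {V : Type*} [Fintype V] [DecidableEq V]
    (hV : (Fintype.card V : K) ≠ 1) : IsUnit ((completeGraph V).adjMatrix K).det := by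
  have hV' : (Fintype.card V : K) - 1 ≠ 0 := sub_ne_zero.mpr hV
  rw [adjMatrix_completeGraph_eq_of_one_sub_one]
  refine isUnit_det_of_right_inverse (B := ((Fintype.card V : K) - 1)⁻¹ • of 1 - 1) ?_
  set J : Matrix V V K := of 1
  have hJ : J * J = (Fintype.card V : K) • J := by
    ext; simp [J, mul_apply]
  calc (J - 1) * (((Fintype.card V : K) - 1)⁻¹ • J - 1)
      = (((Fintype.card V : K) - 1)⁻¹ * ((Fintype.card V : K) - 1) - 1) • J + 1 := by
        rw [mul_sub, sub_mul, sub_mul, Matrix.mul_smul, hJ, smul_smul, Matrix.mul_one,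
          Matrix.one_mul, Matrix.one_mul]
        module
    _ = 1 := by rw [inv_mul_cancel₀ hV', sub_self, zero_smul, zero_add]

variable (K) (r : ℕ) [NeZero r]

/-- The first dual distance matrix of `K_r` with respect to the vertex `0`. -/
def completeDualAdj : Matrix (Fin r) (Fin r) K :=
  diagonal fun a => if a = 0 then (r : K) - 1 else -1

variable {K r}

theorem isUnit_det_completeDualAdj (hr : (r : K) ≠ 1) : IsUnit (completeDualAdj K r).det := by
  rw [← isUnit_iff_isUnit_det, completeDualAdj, isUnit_diagonal, Pi.isUnit_iff]
  intro a
  split_ifs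
  · exact (sub_ne_zero.mpr hr).isUnit
  · exact isUnit_one.neg

theorem completeDualAdj_mulVec_of_apply_zero {w : Fin r → K} (hw : w 0 = 0) :
    completeDualAdj K r *ᵥ w = -w := by
  funext a
  by_cases ha : a = 0 <;> simp [completeDualAdj, mulVec_diagonal, ha, hw]

theorem completeDualAdj_mulVec_single :
    completeDualAdj K r *ᵥ (fun a => if a = 0 then 1 else 0) =
      fun a => if a = 0 then (r : K) - 1 else 0 := by
  funext a
  by_cases ha : a = 0 <;> simp [completeDualAdj, mulVec_diagonal, ha]

theorem sum_completeDualAdj_mulVec_one : ∑ a, (completeDualAdj K r *ᵥ fun _ => 1) a = 0 := by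
  have hoff : ∀ a ∈ ({0}ᶜ : Finset (Fin r)), (completeDualAdj K r *ᵥ fun _ => 1) a = -1 :=
    fun a ha => by simp_all [completeDualAdj, mulVec_diagonal]
  rw [Fintype.sum_eq_add_sum_compl 0, sum_congr rfl hoff]
  simp [completeDualAdj, mulVec_diagonal, card_compl, Nat.cast_sub NeZero.one_le]

theorem adjMatrix_mul_completeDualAdj_mulVec_single :
    ((completeGraph (Fin r)).adjMatrix K * completeDualAdj K r) *ᵥ
        (fun a => if a = 0 then 1 else 0) =
      (1 - r : K) • (completeDualAdj K r * (completeGraph (Fin r)).adjMatrix K) *ᵥ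
        (fun a => if a = 0 then 1 else 0) := by
  rw [← mulVec_mulVec, ← mulVec_mulVec, completeDualAdj_mulVec_single,
    completeGraph_adjMatrix_mulVec, completeGraph_adjMatrix_mulVec]
  funext a
  by_cases ha : a = 0 <;> simp [completeDualAdj, mulVec_diagonal, ha]

theorem adjMatrix_mul_completeDualAdj_mulVec_one (hr : (r : K) ≠ 1) :
    ((completeGraph (Fin r)).adjMatrix K * completeDualAdj K r) *ᵥ (fun _ => 1) =
      (1 - r : K)⁻¹ • (completeDualAdj K r * (completeGraph (Fin r)).adjMatrix K) *ᵥ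
        (fun _ => 1) := by
  have hr' : (1 - r : K) ≠ 0 := sub_ne_zero.mpr hr.symm
  rw [← mulVec_mulVec, ← mulVec_mulVec, completeGraph_adjMatrix_mulVec,
    completeGraph_adjMatrix_mulVec, sum_completeDualAdj_mulVec_one]
  funext a
  by_cases ha : a = 0 <;> simp [completeDualAdj, mulVec_diagonal, ha, hr']
  field_simp
  ring

theorem adjMatrix_mul_completeDualAdj_mulVec_of_sum_eq_zero {w : Fin r → K} (hw₀ : w 0 = 0)
    (hw : ∑ a, w a = 0) :
    ((completeGraph (Fin r)).adjMatrix K * completeDualAdj K r) *ᵥ w =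
      (completeDualAdj K r * (completeGraph (Fin r)).adjMatrix K) *ᵥ w := by
  have hKw : (completeGraph (Fin r)).adjMatrix K *ᵥ w = -w := by
    rw [completeGraph_adjMatrix_mulVec, hw]; funext a; simp
  rw [← mulVec_mulVec, ← mulVec_mulVec, completeDualAdj_mulVec_of_apply_zero hw₀, mulVec_neg,
    hKw, completeDualAdj_mulVec_of_apply_zero (by simp [hw₀])]

end CompleteGraph

theorem hammingAD_eq_kroneckerPi (D r : ℕ) :
    hammingAD D r = kroneckerPi fun _ => (completeGraph (Fin r)).adjMatrix ℂ := by
  ext u y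
  simp only [hammingAD, kroneckerPi_apply, of_apply, adjMatrix_apply, completeGraph_eq_top,
    top_adj, prod_boole, mem_univ, true_implies]

theorem hammingADstar_eq_kroneckerPi (D r : ℕ) [NeZero r] :
    hammingADstar D r = kroneckerPi fun _ => completeDualAdj ℂ r := by
  rw [hammingADstar, completeDualAdj, kroneckerPi_diagonal]
  congr 1
  funext y
  have hcard : #{k | y k = 0} = D - hammingWt y := by
    have := card_filter_add_card_filter_not (s := univ) fun k => y k = 0
    rw [card_univ, Fintype.card_fin] at this
    have hwt : #{k | ¬y k = 0} = hammingWt y := rfl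
    omega
  rw [prod_ite, prod_const, prod_const, hcard, mul_comm]
  rfl

theorem prod_ite_mem_zpow_sub {ι G : Type*} [Fintype ι] [DecidableEq ι] [CommGroupWithZero G]
    {a : G} (ha : a ≠ 0) {S T : Finset ι} (h : Disjoint S T) :
    ∏ k, (if k ∈ S then a else if k ∈ T then a⁻¹ else 1) = a ^ ((#S : ℤ) - #T) := by
  have hsplit : ∀ k, (if k ∈ S then a else if k ∈ T then a⁻¹ else 1) =
      (if k ∈ S then a else 1) * (if k ∈ T then a⁻¹ else 1) := by
    intro k
    by_cases hS : k ∈ S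
    · simp [hS, disjoint_left.mp h hS]
    · simp [hS]
  rw [prod_congr rfl fun k _ => hsplit k, prod_mul_distrib, Fintype.prod_ite_mem,
    Fintype.prod_ite_mem, prod_const, prod_const, zpow_sub₀ ha, zpow_natCast, zpow_natCast,
    inv_pow, div_eq_mul_inv]

theorem stmt18 (D r : ℕ) (hr : 3 ≤ r)
    (vk : Fin D → Fin r → ℂ) (S₀ S₁ S₂ : Finset (Fin D))
    (hunion : S₀ ∪ S₁ ∪ S₂ = Finset.univ)
    (h01 : Disjoint S₀ S₁)
    -- on `S₀` the factor is `δ₀`: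
    (h0 : ∀ k ∈ S₀, vk k = fun a => if a = (⟨0, by omega⟩ : Fin r) then 1 else 0)
    -- on `S₁` the factor is the all-ones vector `𝟙`:
    (h1 : ∀ k ∈ S₁, vk k = fun _ => 1)
    -- on `S₂` the factor vanishes at `0` and has coordinate sum `0`:
    (h2 : ∀ k ∈ S₂, vk k (⟨0, by omega⟩ : Fin r) = 0 ∧ ∑ a : Fin r, vk k a = 0)
    (v : (Fin D → Fin r) → ℂ)
    (hv : v = fun y => ∏ k : Fin D, vk k (y k)) :
    (@hammingC D r ⟨by omega⟩).mulVec v =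
      ((1 - (r : ℂ)) ^ ((S₀.card : ℤ) - (S₁.card : ℤ))) • v := by
  have : NeZero r := ⟨by omega⟩
  have hr1 : (r : ℂ) ≠ 1 := by exact_mod_cast (by omega : r ≠ 1)
  have hzero : (⟨0, by omega⟩ : Fin r) = 0 := rfl
  rw [hzero] at h0 h2
  have hfactor : ∀ k, ((completeGraph (Fin r)).adjMatrix ℂ * completeDualAdj ℂ r) *ᵥ vk k =
      (if k ∈ S₀ then 1 - (r : ℂ) else if k ∈ S₁ then (1 - (r : ℂ))⁻¹ else 1) •
        (completeDualAdj ℂ r * (completeGraph (Fin r)).adjMatrix ℂ) *ᵥ vk k := by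
    intro k
    split_ifs with hk₀ hk₁
    · rw [h0 k hk₀]; exact adjMatrix_mul_completeDualAdj_mulVec_single
    · rw [h1 k hk₁]; exact adjMatrix_mul_completeDualAdj_mulVec_one hr1
    · have hk₂ : k ∈ S₂ := by simpa [← hunion, hk₀, hk₁] using mem_univ k
      rw [one_smul]
      exact adjMatrix_mul_completeDualAdj_mulVec_of_sum_eq_zero (h2 k hk₂).1 (h2 k hk₂).2
  subst hv
  refine mulVec_commutator_eq_smul_s18 ?_ ?_ ?_
  · rw [hammingAD_eq_kroneckerPi]
    exact isUnit_det_kroneckerPi fun _ => isUnit_det_completeGraph_adjMatrix (by simpa using hr1)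
  · rw [hammingADstar_eq_kroneckerPi]
    exact isUnit_det_kroneckerPi fun _ => isUnit_det_completeDualAdj hr1
  · rw [hammingAD_eq_kroneckerPi, hammingADstar_eq_kroneckerPi, kroneckerPi_mul, kroneckerPi_mul,
      ← prod_ite_mem_zpow_sub (sub_ne_zero.mpr hr1.symm) h01]
    exact kroneckerPi_mulVec_prod_eq_smul hfactor
end
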